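/- arXiv:1112.3128 — 2 statements merged into one kernel-verified Lean document; each statement's English description precedes it below -/
import Mathlib

section
/- Let (A_i)_{i∈I} be unital *-algebras over ℂ, let (H_i)_{i∈I} be nonzero complex Hilbert spaces, and let Ψ_i : A_i → (H_i →L[ℂ] H_i) be injective unital *-algebra homomorphisms (unital ℂ-algebra homomorphisms satisfying Ψ_i(a*) = Ψ_i(a)†, where † is the Hilbert-space adjoint). Let Ψ : ⨂_{i∈I} A_i → Module.End ℂ (⨂_{i∈I} H_i) be the ℂ-algebra homomorphism determined by Ψ(⊗a)(⊗x) = ⊗(Ψ_i(a_i)(x_i)). Define ⨂^ut_{i∈I} A_i to be the ℂ-linear span in ⨂_{i∈I} A_i of {⊗a : a ∈ Π_{i∈I} A_i such that there exists u ∈ Π_{i∈I} unitary A_i with a_i = u_i for all but finitely many i}. If b ∈ ⨂^ut_{i∈I} A_i and Ψ(b)(ξ) = 0 for every ξ ∈ ⨂^un_{i∈I} H_i, then b = 0. -/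
open scoped TensorProduct

/-- The subalgebra `⨂^ut_{i∈I} A_i`: the span in `⨂_{i∈I} A_i` of the elementary tensors
`⊗a` where `a` agrees with some family of unitaries at all but finitely many coordinates. -/
noncomputable def utTensorSpan {I : Type*} (A : I → Type*) [∀ i, Ring (A i)]
    [∀ i, Algebra ℂ (A i)] [∀ i, StarRing (A i)] [∀ i, StarModule ℂ (A i)] :
    Submodule ℂ (⨂[ℂ] i, A i) :=
  Submodule.span ℂ {t | ∃ a : ∀ i, A i,
    (∃ u : ∀ i, unitary (A i), {i | a i ≠ (u i : A i)}.Finite) ∧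
    t = PiTensorProduct.tprod ℂ a}

/-- `⨂^un_{i∈I} H_i`: the span in `⨂_{i∈I} H_i` of the elementary tensors of families of
unit vectors. -/
noncomputable def unTensorSpan {I : Type*} (H : I → Type*) [∀ i, NormedAddCommGroup (H i)]
    [∀ i, InnerProductSpace ℂ (H i)] : Submodule ℂ (⨂[ℂ] i, H i) :=
  Submodule.span ℂ {t | ∃ x : ∀ i, H i, (∀ i, ‖x i‖ = 1) ∧ t = PiTensorProduct.tprod ℂ x}

/-!
Write `b = ∑ₖ fₖ • ⊗aₖ` with every `aₖ` a family of unitaries off a finite set, and group the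
indices `k` by cofinite equality of the families `aₖ`; it suffices that each group sums to zero.
For the group of `k₀`, pick unit vectors `x₀ i` on which `Ψ i (aₖ i)` and `Ψ i (a_{k₀} i)` differ
whenever `aₖ i ≠ a_{k₀} i`, and put `y₀ i = Ψ i (a_{k₀} i) (x₀ i)`. Off a finite window `T`, the
inner product `⟪y₀ i, Ψ i (aₖ i) (x₀ i)⟫` of two unit vectors equals `1` exactly when
`aₖ i = a_{k₀} i`. Hence the functional `⊗zᵢ ↦ ∏ᵢ ⟪yᵢ, zᵢ⟫`, which is set to `0` when infinitely
many factors differ from `1`, kills all other groups and sends the group of `k₀` to a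
finite sum of products over `T`. As `xᵢ, yᵢ` vary over `T` these are all products of matrix
coefficients, which separate the points of each `A i` because `Ψ i` is injective; an induction
over `T` then shows that the group sum vanishes.
-/

open Filter Function PiTensorProduct
open scoped InnerProductSpace

section FinprodOrZero

variable {ι R : Type*}

theorem Function.mulSupport_update_subset [One R] [DecidableEq ι] (c : ι → R) (i : ι) (x : R) :
    mulSupport (update c i x) ⊆ insert i (mulSupport c) := by
  intro j hj
  rcases eq_or_ne j i with rfl | hji
  · exact Set.mem_insert _ _
  · exact Set.mem_insert_of_mem _ (by simpa [hji] using hj)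

variable [CommSemiring R]

/-- `finprod` is `1` on families of infinite multiplicative support; that value is not
multilinear, whence `0` here. -/
noncomputable def finprodOrZero (c : ι → R) : R :=
  open Classical in if (mulSupport c).Finite then ∏ᶠ i, c i else 0

theorem finprodOrZero_eq_prod {c : ι → R} {s : Finset ι} (h : mulSupport c ⊆ s) :
    finprodOrZero c = ∏ i ∈ s, c i := by
  rw [finprodOrZero, if_pos (s.finite_toSet.subset h), finprod_eq_prod_of_mulSupport_subset c h]

theorem finprodOrZero_of_infinite {c : ι → R} (h : (mulSupport c).Infinite) :
    finprodOrZero c = 0 :=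
  if_neg h

theorem finprodOrZero_update [DecidableEq ι] (c : ι → R) (i : ι) (x : R) :
    finprodOrZero (update c i x) = x * finprodOrZero (update c i 1) := by
  by_cases hc : (mulSupport c).Finite
  · have hs (y : R) : mulSupport (update c i y) ⊆ ↑(insert i hc.toFinset) := by
      simpa using mulSupport_update_subset c i y
    rw [finprodOrZero_eq_prod (hs x), finprodOrZero_eq_prod (hs 1),
      Finset.prod_update_of_mem (Finset.mem_insert_self _ _),
      Finset.prod_update_of_mem (Finset.mem_insert_self _ _), one_mul]
  · have hinf (y : R) : (mulSupport (update c i y)).Infinite := fun hfin =>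
      hc ((hfin.insert i).subset (by simpa using mulSupport_update_subset (update c i y) i (c i)))
    rw [finprodOrZero_of_infinite (hinf x), finprodOrZero_of_infinite (hinf 1), mul_zero]

noncomputable def finprodOrZeroMultilinear : MultilinearMap R (fun _ : ι => R) R where
  toFun := finprodOrZero
  map_update_add' c i x y := by
    rw [finprodOrZero_update c i (x + y), finprodOrZero_update c i x, finprodOrZero_update c i y,
      add_mul]
  map_update_smul' c i r x := by
    rw [finprodOrZero_update c i (r • x), finprodOrZero_update c i x, smul_eq_mul, smul_eq_mul,
      mul_assoc]

end FinprodOrZero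

namespace PiTensorProduct

theorem tprod_eq_sum_update_basis {R ι β : Type*} [CommSemiring R] [DecidableEq ι]
    {M : ι → Type*} [∀ i, AddCommMonoid (M i)] [∀ i, Module R (M i)]
    (m : ∀ i, M i) (j : ι) (B : Module.Basis β R (M j)) {F : Finset β}
    (hF : (B.repr (m j)).support ⊆ F) :
    tprod R m = ∑ b ∈ F, B.repr (m j) b • tprod R (update m j (B b)) := by
  conv_lhs => rw [← update_eq_self j m, ← B.linearCombination_repr (m j),
    Finsupp.linearCombination_apply, Finsupp.sum_of_support_subset _ hF _ (by simp)]
  simp only [MultilinearMap.map_update_sum, MultilinearMap.map_update_smul]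

theorem sum_smul_tprod_eq_zero_of_separating {K ι κ : Type*} [Field K]
    {V P : ι → Type*} [∀ i, AddCommGroup (V i)] [∀ i, Module K (V i)] [∀ i, Nonempty (P i)]
    (L : ∀ i, P i → Module.Dual K (V i)) (hL : ∀ i (v : V i), (∀ p, L i p v = 0) → v = 0)
    (s : Finset κ) (T : Finset ι) (e : ∀ i, V i) (c : κ → K) (a : κ → ∀ i, V i)
    (ha : ∀ k ∈ s, ∀ i ∉ T, a k i = e i)
    (h : ∀ p : ∀ i, P i, ∑ k ∈ s, c k * ∏ i ∈ T, L i (p i) (a k i) = 0) :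
    ∑ k ∈ s, c k • tprod K (a k) = 0 := by
  classical
  induction T using Finset.induction_on generalizing e c a with
  | empty =>
    have hae : ∀ k ∈ s, a k = e := fun k hk => funext fun i => ha k hk i (Finset.notMem_empty i)
    have hc : ∑ k ∈ s, c k = 0 := by simpa using h fun _ => Classical.arbitrary _
    rw [Finset.sum_congr rfl fun k hk => by rw [hae k hk], ← Finset.sum_smul, hc, zero_smul]
  | insert j T hj ih =>
    let B := Module.Basis.ofVectorSpace K (V j)
    let F := s.biUnion fun k => (B.repr (a k j)).support
    have hne {i} (hi : i ∈ T) : i ≠ j := ne_of_mem_of_not_mem hi hj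
    have hprod_update_p (p : ∀ i, P i) (r : P j) (m : ∀ i, V i) :
        ∏ i ∈ T, L i (update p j r i) (m i) = ∏ i ∈ T, L i (p i) (m i) :=
      Finset.prod_congr rfl fun i hi => by rw [update_of_ne (hne hi)]
    have hprod_update_m (p : ∀ i, P i) (m : ∀ i, V i) (v : V j) :
        ∏ i ∈ T, L i (p i) (update m j v i) = ∏ i ∈ T, L i (p i) (m i) :=
      Finset.prod_congr rfl fun i hi => by rw [update_of_ne (hne hi)]
    have slice (β) : ∑ k ∈ s, (c k * B.repr (a k j) β) • tprod K (update (a k) j (B β)) = 0 := by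
      refine ih (update e j (B β)) _ _ (fun k hk i hi => ?_) fun p => ?_
      · rcases eq_or_ne i j with rfl | hij
        · simp
        · rw [update_of_ne hij, update_of_ne hij]
          exact ha k hk i (by simp [hij, hi])
      · have hslot : ∑ k ∈ s, (c k * ∏ i ∈ T, L i (p i) (a k i)) • a k j = 0 := by
          refine hL j _ fun r => ?_
          simpa [Finset.prod_insert hj, hprod_update_p, mul_assoc, mul_comm] using h (update p j r)
        calc ∑ k ∈ s, c k * B.repr (a k j) β * ∏ i ∈ T, L i (p i) (update (a k) j (B β) i)
            = B.coord β (∑ k ∈ s, (c k * ∏ i ∈ T, L i (p i) (a k i)) • a k j) := by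
              simp only [map_sum, map_smul, Module.Basis.coord_apply, hprod_update_m, smul_eq_mul]
              exact Finset.sum_congr rfl fun k _ => mul_right_comm _ _ _
          _ = 0 := by rw [hslot, map_zero]
    calc ∑ k ∈ s, c k • tprod K (a k)
        = ∑ k ∈ s, ∑ β ∈ F, (c k * B.repr (a k j) β) • tprod K (update (a k) j (B β)) := by
          refine Finset.sum_congr rfl fun k hk => ?_
          rw [tprod_eq_sum_update_basis (a k) j B
            (Finset.subset_biUnion_of_mem (fun k => (B.repr (a k j)).support) hk), Finset.smul_sum]
          simp only [smul_smul, F]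
      _ = 0 := by rw [Finset.sum_comm]; exact Finset.sum_eq_zero fun β _ => slice β

end PiTensorProduct

section MatrixCoefficients

variable {𝕜 : Type*} [RCLike 𝕜]

theorem exists_norm_eq_one_forall_apply_ne_zero {E F ι : Type*}
    [NormedAddCommGroup E] [NormedSpace 𝕜 E] [Nontrivial E] [AddCommGroup F] [Module 𝕜 F]
    [Finite ι] (f : ι → E →ₗ[𝕜] F) (hf : ∀ i, f i ≠ 0) :
    ∃ x : E, ‖x‖ = 1 ∧ ∀ i, f i x ≠ 0 := by
  let p : Option ι → Submodule 𝕜 E := fun o => o.elim ⊥ fun i => LinearMap.ker (f i)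
  have hp : ∀ o, p o ≠ ⊤
    | none => bot_ne_top
    | some i => fun h => hf i (LinearMap.ker_eq_top.1 h)
  obtain ⟨x, hx⟩ := Set.ne_univ_iff_exists_notMem _ |>.1 fun h =>
    (Subspace.exists_eq_top_of_iUnion_eq_univ h).elim fun o => hp o
  simp only [Set.mem_iUnion, SetLike.mem_coe, not_exists] at hx
  have hx0 : x ≠ 0 := hx none
  refine ⟨(‖x‖⁻¹ : 𝕜) • x, norm_smul_inv_norm hx0, fun i => ?_⟩
  rw [map_smul]
  exact smul_ne_zero (by simpa using hx0) (hx (some i))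

theorem exists_norm_eq_one_forall_apply_ne_apply {E F α κ : Type*}
    [NormedAddCommGroup E] [NormedSpace 𝕜 E] [Nontrivial E] [NormedAddCommGroup F]
    [NormedSpace 𝕜 F] [Finite κ] {Φ : α → E →L[𝕜] F} (hΦ : Injective Φ) (b : κ → α) (b₀ : α) :
    ∃ x : E, ‖x‖ = 1 ∧ ∀ k, b k ≠ b₀ → Φ (b k) x ≠ Φ b₀ x := by
  obtain ⟨x, hx, hne⟩ := exists_norm_eq_one_forall_apply_ne_zero
    (fun k : {k // b k ≠ b₀} => ((Φ (b k) - Φ b₀ : E →L[𝕜] F) : E →ₗ[𝕜] F))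
    fun k h => k.2 (hΦ (sub_eq_zero.1 (ContinuousLinearMap.coe_injective h)))
  exact ⟨x, hx, fun k hk => sub_ne_zero.1 (hne ⟨k, hk⟩)⟩

variable {A E F : Type*} [AddCommGroup A] [Module 𝕜 A] [NormedAddCommGroup E] [NormedSpace 𝕜 E]
  [NormedAddCommGroup F] [InnerProductSpace 𝕜 F]

noncomputable def matrixCoeff (Φ : A →ₗ[𝕜] E →L[𝕜] F) (x : E) (y : F) : Module.Dual 𝕜 A :=
  innerₛₗ 𝕜 y ∘ₗ (ContinuousLinearMap.apply 𝕜 F x).toLinearMap ∘ₗ Φ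

@[simp]
theorem matrixCoeff_apply (Φ : A →ₗ[𝕜] E →L[𝕜] F) (x : E) (y : F) (a : A) :
    matrixCoeff Φ x y a = ⟪y, Φ a x⟫_𝕜 :=
  rfl

theorem eq_zero_of_forall_matrixCoeff_eq_zero {Φ : A →ₗ[𝕜] E →L[𝕜] F} (hΦ : Injective Φ)
    {a : A} (h : ∀ x : E, ‖x‖ = 1 → ∀ y, matrixCoeff Φ x y a = 0) : a = 0 := by
  refine hΦ ((map_zero Φ).symm ▸ norm_le_zero_iff.1 ?_)
  refine ContinuousLinearMap.opNorm_le_of_unit_norm le_rfl fun x hx => ?_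
  rw [norm_le_zero_iff, ← inner_self_eq_zero (𝕜 := 𝕜)]
  exact h x hx _

end MatrixCoefficients

theorem norm_starAlgHom_unitary_apply {𝕜 A H : Type*} [RCLike 𝕜] [Ring A] [Algebra 𝕜 A]
    [StarRing A] [NormedAddCommGroup H] [InnerProductSpace 𝕜 H] [CompleteSpace H]
    (Ψ : A →⋆ₐ[𝕜] (H →L[𝕜] H)) (u : unitary A) (x : H) : ‖Ψ u x‖ = ‖x‖ :=
  ContinuousLinearMap.norm_map_of_mem_unitary (Unitary.map_mem Ψ u.2) x

section TensorRepresentation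

variable {𝕜 I : Type*} [RCLike 𝕜] {A H : I → Type*} [∀ i, Ring (A i)] [∀ i, Algebra 𝕜 (A i)]
  [∀ i, StarRing (A i)] [∀ i, NormedAddCommGroup (H i)] [∀ i, InnerProductSpace 𝕜 (H i)]

noncomputable def finprodOrZeroInner (y : ∀ i, H i) : (⨂[𝕜] i, H i) →ₗ[𝕜] 𝕜 :=
  lift finprodOrZeroMultilinear ∘ₗ map fun i => innerₛₗ 𝕜 (y i)

theorem finprodOrZeroInner_tprod (y z : ∀ i, H i) :
    finprodOrZeroInner y (tprod 𝕜 z) = finprodOrZero fun i => ⟪y i, z i⟫_𝕜 := by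
  simp [finprodOrZeroInner, finprodOrZeroMultilinear]

variable [∀ i, CompleteSpace (H i)] [∀ i, Nontrivial (H i)]

theorem exists_finprodOrZero_inner_eq_ite {κ : Type*} [Finite κ]
    (Ψ : ∀ i, A i →⋆ₐ[𝕜] (H i →L[𝕜] H i)) (hΨ : ∀ i, Injective (Ψ i))
    (a : κ → ∀ i, A i) (u : κ → ∀ i, unitary (A i)) (hu : ∀ k, ∀ᶠ i in cofinite, a k i = u k i)
    (k₀ : κ) [DecidablePred fun k => ∀ᶠ i in cofinite, a k i = a k₀ i] :
    ∃ (x₀ y₀ : ∀ i, H i) (T : Finset I), (∀ i, ‖x₀ i‖ = 1) ∧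
      (∀ k, (∀ᶠ i in cofinite, a k i = a k₀ i) → ∀ i ∉ T, a k i = a k₀ i) ∧
      ∀ x y : ∀ i, H i, (∀ i ∉ T, x i = x₀ i) → (∀ i ∉ T, y i = y₀ i) → ∀ k,
        finprodOrZero (fun i => ⟪y i, Ψ i (a k i) (x i)⟫_𝕜) =
          if ∀ᶠ i in cofinite, a k i = a k₀ i then ∏ i ∈ T, ⟪y i, Ψ i (a k i) (x i)⟫_𝕜 else 0 := by
  choose x₀ hx₀ hsep using fun i => exists_norm_eq_one_forall_apply_ne_apply (hΨ i) (a · i) (a k₀ i)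
  obtain ⟨T, hT⟩ : ∃ T : Finset I, ∀ i ∉ T, ∀ k, a k i = u k i ∧
      ((∀ᶠ i in cofinite, a k i = a k₀ i) → a k i = a k₀ i) := by
    have : ∀ᶠ i in cofinite, ∀ k, a k i = u k i ∧
        ((∀ᶠ i in cofinite, a k i = a k₀ i) → a k i = a k₀ i) := by
      refine eventually_all.2 fun k => (hu k).and ?_
      by_cases hk : ∀ᶠ i in cofinite, a k i = a k₀ i
      · exact hk.mono fun _ h _ => h
      · exact .of_forall fun _ h => absurd h hk
    exact ⟨(eventually_cofinite.1 this).toFinset, fun i hi => by simpa using hi⟩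
  refine ⟨x₀, fun i => Ψ i (a k₀ i) (x₀ i), T, hx₀, fun k hk i hi => (hT i hi k).2 hk,
    fun x y hx hy k => ?_⟩
  have hfactor {i} (hi : i ∉ T) : ⟪y i, Ψ i (a k i) (x i)⟫_𝕜 = 1 ↔ a k i = a k₀ i := by
    have hnorm (l : κ) : ‖Ψ i (a l i) (x₀ i)‖ = 1 := by
      rw [(hT i hi l).1, norm_starAlgHom_unitary_apply, hx₀]
    rw [hx i hi, hy i hi, inner_eq_one_iff_of_norm_eq_one (hnorm k₀) (hnorm k)]
    exact ⟨fun h => not_not.1 fun hne => hsep i k hne h.symm, fun h => by rw [h]⟩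
  split_ifs with hk
  · exact finprodOrZero_eq_prod fun i hi => not_not.1 fun hiT =>
      hi ((hfactor hiT).2 ((hT i hiT k).2 hk))
  · refine finprodOrZero_of_infinite (((frequently_cofinite_iff_infinite.1
      (not_eventually.1 hk)).sdiff T.finite_toSet).mono fun i hi => ?_)
    exact fun h => hi.1 ((hfactor hi.2).1 h)

theorem sum_smul_tprod_filter_eventuallyEq_eq_zero {κ : Type*} [Fintype κ]
    (Ψ : ∀ i, A i →⋆ₐ[𝕜] (H i →L[𝕜] H i)) (hΨ : ∀ i, Injective (Ψ i))
    (f : κ → 𝕜) (a : κ → ∀ i, A i) (u : κ → ∀ i, unitary (A i))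
    (hu : ∀ k, ∀ᶠ i in cofinite, a k i = u k i)
    (hzero : ∀ x : ∀ i, H i, (∀ i, ‖x i‖ = 1) →
      ∑ k, f k • tprod 𝕜 (fun i => Ψ i (a k i) (x i)) = 0)
    (k₀ : κ) [DecidablePred fun k => ∀ᶠ i in cofinite, a k i = a k₀ i] :
    ∑ k with ∀ᶠ i in cofinite, a k i = a k₀ i, f k • tprod 𝕜 (a k) = 0 := by
  classical
  obtain ⟨x₀, y₀, T, hx₀, hT, hΛ⟩ := exists_finprodOrZero_inner_eq_ite Ψ hΨ a u hu k₀
  have hP (i : I) : Nonempty ({x : H i // ‖x‖ = 1} × H i) := ⟨(⟨x₀ i, hx₀ i⟩, 0)⟩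
  refine sum_smul_tprod_eq_zero_of_separating (P := fun i => {x : H i // ‖x‖ = 1} × H i)
    (fun i p => matrixCoeff (Ψ i).toAlgHom.toLinearMap (p.1 : H i) p.2)
    (fun i v hv => eq_zero_of_forall_matrixCoeff_eq_zero (hΨ i) fun x hx y => hv (⟨x, hx⟩, y))
    _ T (a k₀) f a (fun k hk i hi => hT k (Finset.mem_filter.1 hk).2 i hi) fun p => ?_
  let x := T.piecewise (fun i => ((p i).1 : H i)) x₀
  let y := T.piecewise (fun i => (p i).2) y₀
  have hx : ∀ i, ‖x i‖ = 1 := fun i => by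
    by_cases hi : i ∈ T <;> simp [x, hi, hx₀, (p i).1.2]
  have hsum := congrArg (finprodOrZeroInner y) (hzero x hx)
  simp only [map_sum, map_smul, finprodOrZeroInner_tprod, map_zero,
    hΛ x y (fun i => T.piecewise_eq_of_notMem _ _) (fun i => T.piecewise_eq_of_notMem _ _)]
    at hsum
  refine (Finset.sum_filter _ _).trans (Eq.trans (Finset.sum_congr rfl fun k _ => ?_) hsum)
  split_ifs
  · rw [smul_eq_mul]
    congr 1
    exact Finset.prod_congr rfl fun i hi => by simp [x, y, hi]
  · rw [smul_zero]

end TensorRepresentation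

theorem piTensor_representation_injective_on_ut_general {I : Type*}
    (A : I → Type*) [∀ i, Ring (A i)] [∀ i, Algebra ℂ (A i)]
    [∀ i, StarRing (A i)] [∀ i, StarModule ℂ (A i)]
    (H : I → Type*) [∀ i, NormedAddCommGroup (H i)] [∀ i, InnerProductSpace ℂ (H i)]
    [∀ i, CompleteSpace (H i)] [∀ i, Nontrivial (H i)]
    (Ψ : ∀ i, A i →ₐ[ℂ] (H i →L[ℂ] H i))
    (hΨstar : ∀ i (a : A i), Ψ i (star a) = ContinuousLinearMap.adjoint (Ψ i a))
    (hΨinj : ∀ i, Function.Injective (Ψ i))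
    (Θ : (⨂[ℂ] i, A i) →ₐ[ℂ] Module.End ℂ (⨂[ℂ] i, H i))
    (hΘ : ∀ (a : ∀ i, A i) (x : ∀ i, H i),
      Θ (PiTensorProduct.tprod ℂ a) (PiTensorProduct.tprod ℂ x) =
        PiTensorProduct.tprod ℂ (fun i => Ψ i (a i) (x i)))
    (b : ⨂[ℂ] i, A i) (hb : b ∈ utTensorSpan A)
    (hzero : ∀ ξ ∈ unTensorSpan H, Θ b ξ = 0) :
    b = 0 := by
  classical
  obtain ⟨n, f, g, rfl⟩ := Submodule.mem_span_set'.mp hb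
  choose a hau hga using fun k => (g k).2
  choose u hu using hau
  let Ψ' (i : I) : A i →⋆ₐ[ℂ] (H i →L[ℂ] H i) :=
    { Ψ i with map_star' := fun a => by simp [hΨstar, ContinuousLinearMap.star_eq_adjoint] }
  let cofiniteEq : Setoid (Fin n) :=
    ⟨fun k l => ∀ᶠ i in cofinite, a k i = a l i, ⟨fun _ => .of_forall fun _ => rfl,
      fun h => h.mono fun _ => Eq.symm, fun h h' => (h.and h').mono fun _ h => h.1.trans h.2⟩⟩
  have hexpand : ∑ k, f k • (g k : ⨂[ℂ] i, A i) = ∑ k, f k • tprod ℂ (a k) := by simp only [hga]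
  rw [hexpand]
  refine Finset.sum_cancels_of_partition_cancels cofiniteEq fun k₀ _ =>
    sum_smul_tprod_filter_eventuallyEq_eq_zero Ψ' hΨinj f a u
      (fun k => eventually_cofinite.2 (hu k)) (fun x hx => ?_) k₀
  simpa [hexpand, hΘ, Ψ'] using hzero _ (Submodule.subset_span ⟨x, hx, rfl⟩)

/-- If `Ψ_i : A_i → B(H_i)` are injective unital `*`-representations, then the induced
tensor-product representation of `⨂_{i∈I} A_i` on `⨂_{i∈I} H_i` is injective on
`⨂^ut_{i∈I} A_i`, already when tested against vectors in `⨂^un_{i∈I} H_i`. -/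
theorem piTensor_representation_injective_on_ut {I : Type*} [Infinite I]
    (A : I → Type*) [∀ i, Ring (A i)] [∀ i, Algebra ℂ (A i)]
    [∀ i, StarRing (A i)] [∀ i, StarModule ℂ (A i)]
    (H : I → Type*) [∀ i, NormedAddCommGroup (H i)] [∀ i, InnerProductSpace ℂ (H i)]
    [∀ i, CompleteSpace (H i)] [∀ i, Nontrivial (H i)]
    (Ψ : ∀ i, A i →ₐ[ℂ] (H i →L[ℂ] H i))
    (hΨstar : ∀ i (a : A i), Ψ i (star a) = ContinuousLinearMap.adjoint (Ψ i a))
    (hΨinj : ∀ i, Function.Injective (Ψ i))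
    (Θ : (⨂[ℂ] i, A i) →ₐ[ℂ] Module.End ℂ (⨂[ℂ] i, H i))
    (hΘ : ∀ (a : ∀ i, A i) (x : ∀ i, H i),
      Θ (PiTensorProduct.tprod ℂ a) (PiTensorProduct.tprod ℂ x) =
        PiTensorProduct.tprod ℂ (fun i => Ψ i (a i) (x i)))
    (b : ⨂[ℂ] i, A i) (hb : b ∈ utTensorSpan A)
    (hzero : ∀ ξ ∈ unTensorSpan H, Θ b ξ = 0) :
    b = 0 :=
  piTensor_representation_injective_on_ut_general A H Ψ hΨstar hΨinj Θ hΘ b hb hzero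
end

section
/- Let (G_i)_{i∈I} be groups, let (H_i)_{i∈I} be nonzero complex Hilbert spaces, and for each i let π_i : G_i → unitary group of (H_i →L[ℂ] H_i) be a group homomorphism (a unitary representation) such that the induced ℂ-algebra homomorphism MonoidAlgebra ℂ G_i → (H_i →L[ℂ] H_i), sending single g 1 to π_i(g), is injective. Let ρ : MonoidAlgebra ℂ (Π_{i∈I} G_i) → Module.End ℂ (⨂_{i∈I} H_i) be the ℂ-algebra homomorphism determined by ρ(single g 1)(⊗x) = ⊗(π_i(g_i)(x_i)) for g ∈ Π_{i∈I} G_i. If b ∈ MonoidAlgebra ℂ (Π_{i∈I} G_i) satisfies ρ(b)(ξ) = 0 for every ξ ∈ ⨂^un_{i∈I} H_i, then b = 0. -/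
/-!
Write `b = ∑ c_g g`, fix unit vectors `e_i` and some `g₀` with `c_{g₀} ≠ 0`, and call `g` close
to `g₀` if `π_i(g_i) e_i = π_i(g₀_i) e_i` for all but finitely many `i`. Test `ρ(b)(⊗x)` against
the functional `⊗y ↦ ∏ ⟪v_i, y_i⟫` of the algebraic tensor product (set to `0` unless almost all
factors equal `1`), where `v_i = π_i(g₀_i) e_i` outside a finite set `D` and `x_i = e_i` there:
only the `g` close to `g₀` survive, so `∑_{g close to g₀} c_g ∏_{i ∈ D} ⟪u_i, π_i(g_i) x_i⟫ = 0`
for all `u, x`. Once `D` is large enough that these `g` are determined by their coordinates in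
`D`, induction on `D`, using the injectivity of each `ℂ[G_i] → B(H_i)`, makes all these `c_g`
vanish, in particular `c_{g₀}`.
-/

open Function
open scoped TensorProduct InnerProductSpace

namespace MultilinearMap

variable {ι R : Type*} [CommSemiring R] {M : ι → Type*} [∀ i, AddCommMonoid (M i)]
  [∀ i, Module R (M i)]

open scoped Classical in
noncomputable def restrictedProdFun (f : ∀ i, M i →ₗ[R] R) (x : ∀ i, M i) : R :=
  if (mulSupport fun i => f i (x i)).Finite then ∏ᶠ i, f i (x i) else 0

lemma restrictedProdFun_eq_prod {f : ∀ i, M i →ₗ[R] R} {x : ∀ i, M i} {s : Finset ι}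
    (h : (mulSupport fun i => f i (x i)) ⊆ s) :
    restrictedProdFun f x = ∏ i ∈ s, f i (x i) := by
  rw [restrictedProdFun, if_pos (s.finite_toSet.subset h),
    finprod_eq_prod_of_mulSupport_subset _ h]

lemma restrictedProdFun_eq_zero {f : ∀ i, M i →ₗ[R] R} {x : ∀ i, M i}
    (h : (mulSupport fun i => f i (x i)).Infinite) : restrictedProdFun f x = 0 :=
  if_neg h

lemma exists_restrictedProdFun_update_eq_mul [DecidableEq ι] (f : ∀ i, M i →ₗ[R] R)
    (x : ∀ i, M i) (i : ι) :
    ∃ t : R, ∀ p, restrictedProdFun f (update x i p) = f i p * t := by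
  set B := (mulSupport fun j => f j (x j)) \ {i}
  have hB : ∀ p, (mulSupport fun j => f j (update x i p j)) \ {i} = B := by
    intro p
    ext j
    by_cases hj : j = i <;> simp [B, hj]
  by_cases hfin : B.Finite
  · refine ⟨∏ j ∈ hfin.toFinset, f j (x j), fun p => ?_⟩
    have hi : i ∉ hfin.toFinset := by simp [B]
    rw [restrictedProdFun_eq_prod (s := insert i hfin.toFinset), Finset.prod_insert hi,
      update_self]
    · congr 1
      exact Finset.prod_congr rfl fun j hj => by
        rw [update_of_ne (ne_of_mem_of_not_mem hj hi)]
    · intro j hj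
      by_cases hji : j = i
      · simp [hji]
      · simp [← hB p, hji, hj]
  · refine ⟨0, fun p => ?_⟩
    rw [mul_zero]
    refine restrictedProdFun_eq_zero fun h => hfin ?_
    rw [← hB p]
    exact h.sdiff

noncomputable def restrictedProd (f : ∀ i, M i →ₗ[R] R) : MultilinearMap R M R where
  toFun := restrictedProdFun f
  map_update_add' x i p q := by
    obtain ⟨t, ht⟩ := exists_restrictedProdFun_update_eq_mul f x i
    simp only [ht, map_add, add_mul]
  map_update_smul' x i c p := by
    obtain ⟨t, ht⟩ := exists_restrictedProdFun_update_eq_mul f x i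
    simp only [ht, map_smul, smul_eq_mul, mul_assoc]

@[simp] lemma restrictedProd_apply (f : ∀ i, M i →ₗ[R] R) (x : ∀ i, M i) :
    restrictedProd f x = restrictedProdFun f x := rfl

end MultilinearMap

section InnerProduct

open MultilinearMap

variable {𝕜 I : Type*} [RCLike 𝕜] {H : I → Type*} [∀ i, NormedAddCommGroup (H i)]
  [∀ i, InnerProductSpace 𝕜 (H i)]

lemma restrictedProd_innerₛₗ_eq_prod {v y : ∀ i, H i} {D : Finset I}
    (h : ∀ i ∉ D, y i = v i ∧ ‖v i‖ = 1) :
    restrictedProd (fun i => innerₛₗ 𝕜 (v i)) y = ∏ i ∈ D, ⟪v i, y i⟫_𝕜 := by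
  refine restrictedProdFun_eq_prod fun i hi => ?_
  by_contra hiD
  obtain ⟨hyv, hv⟩ := h i hiD
  simp [hyv, inner_self_eq_norm_sq_to_K, hv] at hi

lemma restrictedProd_innerₛₗ_eq_zero {v y : ∀ i, H i} {D : Finset I}
    (hv : ∀ i ∉ D, ‖v i‖ = 1) (hy : ∀ i ∉ D, ‖y i‖ = 1) (h : {i | y i ≠ v i}.Infinite) :
    restrictedProd (fun i => innerₛₗ 𝕜 (v i)) y = 0 := by
  refine restrictedProdFun_eq_zero ((h.sdiff D.finite_toSet).mono fun i hi => ?_)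
  obtain ⟨hyv, hiD⟩ := hi
  rw [mem_mulSupport, innerₛₗ_apply_apply, Ne,
    inner_eq_one_iff_of_norm_eq_one (hv i hiD) (hy i hiD)]
  exact Ne.symm hyv

end InnerProduct

section UnitTensors

variable {I : Type*} {H : I → Type*} [∀ i, NormedAddCommGroup (H i)]
  [∀ i, InnerProductSpace ℂ (H i)]

lemma tprod_mem_unTensorSpan {x : ∀ i, H i} (hx : {i | ‖x i‖ ≠ 1}.Finite) :
    PiTensorProduct.tprod ℂ x ∈ unTensorSpan H := by
  classical
  by_cases hzero : ∃ i, x i = 0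
  · obtain ⟨i, hi⟩ := hzero
    rw [MultilinearMap.map_coord_zero _ i hi]
    exact Submodule.zero_mem _
  push Not at hzero
  set s := hx.toFinset
  set y := s.piecewise (fun i => (‖x i‖⁻¹ : ℂ) • x i) x
  have hy : ∀ i, ‖y i‖ = 1 := by
    intro i
    by_cases hi : i ∈ s
    · simp [y, hi, norm_smul, norm_ne_zero_iff.mpr (hzero i)]
    · have hxi : ‖x i‖ = 1 := by simpa [s] using hi
      simp [y, hi, hxi]
  have hxy : x = s.piecewise (fun i => (‖x i‖ : ℂ) • y i) y := by
    ext i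
    by_cases hi : i ∈ s
    · simp only [y, Finset.piecewise_eq_of_mem _ _ _ hi]
      rw [smul_smul, mul_inv_cancel₀ (by simpa using hzero i), one_smul]
    · simp [y, hi]
  rw [hxy, MultilinearMap.map_piecewise_smul]
  exact Submodule.smul_mem _ _ (Submodule.subset_span ⟨y, hy, rfl⟩)

end UnitTensors

section Independence

variable {𝕜 : Type*} [RCLike 𝕜]

lemma sum_filter_eq_zero_of_forall_sum_mul_inner_eq_zero {G H ι : Type*} [Monoid G] [DecidableEq G]
    [NormedAddCommGroup H] [InnerProductSpace 𝕜 H] {σ : MonoidAlgebra 𝕜 G →ₐ[𝕜] (H →L[𝕜] H)}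
    (hσ : Injective σ) (K : Finset ι) (γ : ι → G) {a : ι → 𝕜}
    (h : ∀ p q : H, ∑ k ∈ K, a k * ⟪q, σ (MonoidAlgebra.single (γ k) 1) p⟫_𝕜 = 0) (g : G) :
    ∑ k ∈ K with γ k = g, a k = 0 := by
  set A := ∑ k ∈ K, a k • MonoidAlgebra.single (γ k) (1 : 𝕜)
  have hσA : σ A = 0 := by
    ext p
    refine ext_inner_left 𝕜 fun q => ?_
    simp only [A, map_sum, map_smul, sum_apply, smul_apply,
      inner_sum, inner_smul_right, h, zero_apply, inner_zero_right]
  have hA : A.coeff g = ∑ k ∈ K with γ k = g, a k := by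
    simp [A, MonoidAlgebra.coeff_sum, Finsupp.single_apply, Finset.sum_filter]
  rw [← hA, (map_eq_zero_iff σ hσ).mp hσA, MonoidAlgebra.coeff_zero, Finsupp.zero_apply]

variable {I : Type*} {G : I → Type*} [∀ i, Monoid (G i)] {H : I → Type*}
  [∀ i, NormedAddCommGroup (H i)] [∀ i, InnerProductSpace 𝕜 (H i)]

theorem eq_zero_of_forall_sum_mul_prod_inner_eq_zero
    {σ : ∀ i, MonoidAlgebra 𝕜 (G i) →ₐ[𝕜] (H i →L[𝕜] H i)} (hσ : ∀ i, Injective (σ i))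
    (D : Finset I) {K : Finset (∀ i, G i)}
    (hK : ∀ g ∈ K, ∀ g' ∈ K, (∀ i ∈ D, g i = g' i) → g = g') {c : (∀ i, G i) → 𝕜}
    (hc : ∀ u x : ∀ i, H i,
      ∑ g ∈ K, c g * ∏ i ∈ D, ⟪u i, σ i (MonoidAlgebra.single (g i) 1) (x i)⟫_𝕜 = 0) :
    ∀ g ∈ K, c g = 0 := by
  classical
  induction D using Finset.induction_on generalizing K c with
  | empty =>
    intro g hg
    obtain rfl : K = {g} := Finset.eq_singleton_iff_unique_mem.mpr
      ⟨hg, fun g' hg' => hK g' hg' g hg (by simp)⟩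
    simpa using hc 0 0
  | @insert i₀ D hi₀ ih =>
    intro g hg
    refine ih (K := {g' ∈ K | g' i₀ = g i₀}) ?_ ?_ g (Finset.mem_filter.mpr ⟨hg, rfl⟩)
    · intro a ha a' ha' haa'
      rw [Finset.mem_filter] at ha ha'
      exact hK a ha.1 a' ha'.1 (Finset.forall_mem_insert _ _ _ |>.mpr ⟨ha.2.trans ha'.2.symm, haa'⟩)
    · intro u x
      refine sum_filter_eq_zero_of_forall_sum_mul_inner_eq_zero (hσ i₀) K (· i₀)
        (fun p q => ?_) (g i₀)
      convert hc (update u i₀ q) (update x i₀ p) using 2 with g' -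
      have hD : ∀ i ∈ D, ⟪update u i₀ q i, σ i (MonoidAlgebra.single (g' i) 1) (update x i₀ p i)⟫_𝕜
          = ⟪u i, σ i (MonoidAlgebra.single (g' i) 1) (x i)⟫_𝕜 := fun i hi => by
        have hii₀ : i ≠ i₀ := fun h => hi₀ (h ▸ hi)
        rw [update_of_ne hii₀, update_of_ne hii₀]
      rw [Finset.prod_insert hi₀, Finset.prod_congr rfl hD, update_self, update_self]
      ring

end Independence

theorem Finset.exists_finset_forall_mem_eq_imp_eq {ι : Type*} {α : ι → Type*}
    (K : Finset (∀ i, α i)) :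
    ∃ D : Finset ι, ∀ g ∈ K, ∀ g' ∈ K, (∀ i ∈ D, g i = g' i) → g = g' := by
  classical
  refine ⟨K.offDiag.biUnion fun p => if h : ∃ i, p.1 i ≠ p.2 i then {h.choose} else ∅, ?_⟩
  intro g hg g' hg' hD
  by_contra hne
  have h : ∃ i, g i ≠ g' i := Function.ne_iff.mp hne
  refine h.choose_spec (hD _ (Finset.mem_biUnion.mpr ⟨(g, g'), ?_, ?_⟩))
  · exact Finset.mem_offDiag.mpr ⟨hg, hg', hne⟩
  · rw [dif_pos h]
    exact Finset.mem_singleton_self _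

section Vanishing

open PiTensorProduct

variable {I : Type*} {G : I → Type*} [∀ i, Monoid (G i)] {H : I → Type*}
  [∀ i, NormedAddCommGroup (H i)] [∀ i, InnerProductSpace ℂ (H i)] [∀ i, CompleteSpace (H i)]

open scoped Classical in
theorem sum_filter_mul_prod_inner_eq_zero (π : ∀ i, G i →* unitary (H i →L[ℂ] H i))
    {ρ : MonoidAlgebra ℂ (∀ i, G i) →ₐ[ℂ] Module.End ℂ (⨂[ℂ] i, H i)}
    (hρ : ∀ (g : ∀ i, G i) (x : ∀ i, H i),
      ρ (MonoidAlgebra.single g 1) (tprod ℂ x) =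
        tprod ℂ (fun i => (π i (g i) : H i →L[ℂ] H i) (x i)))
    {b : MonoidAlgebra ℂ (∀ i, G i)} (hzero : ∀ ξ ∈ unTensorSpan H, ρ b ξ = 0)
    {e w : ∀ i, H i} (he : ∀ i, ‖e i‖ = 1) (hw : ∀ i, ‖w i‖ = 1) {D : Finset I}
    (hD : ∀ g ∈ b.coeff.support, {i | (π i (g i) : H i →L[ℂ] H i) (e i) ≠ w i}.Finite →
      {i | (π i (g i) : H i →L[ℂ] H i) (e i) ≠ w i} ⊆ D)
    (u x : ∀ i, H i) :
    ∑ g ∈ b.coeff.support with {i | (π i (g i) : H i →L[ℂ] H i) (e i) ≠ w i}.Finite,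
      b.coeff g * ∏ i ∈ D, ⟪u i, (π i (g i) : H i →L[ℂ] H i) (x i)⟫_ℂ = 0 := by
  set X := D.piecewise x e
  set Φ := MultilinearMap.restrictedProd fun i => innerₛₗ ℂ (D.piecewise u w i)
  have hX : tprod ℂ X ∈ unTensorSpan H := by
    refine tprod_mem_unTensorSpan (D.finite_toSet.subset fun i hi => ?_)
    by_contra hiD
    simp [X, Finset.piecewise_eq_of_notMem _ _ _ hiD, he] at hi
  have hΦ : ∀ g ∈ b.coeff.support, Φ (fun i => (π i (g i) : H i →L[ℂ] H i) (X i)) =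
      if {i | (π i (g i) : H i →L[ℂ] H i) (e i) ≠ w i}.Finite then
        ∏ i ∈ D, ⟪u i, (π i (g i) : H i →L[ℂ] H i) (x i)⟫_ℂ else 0 := by
    intro g hg
    split_ifs with hfin
    · rw [restrictedProd_innerₛₗ_eq_prod (D := D) fun i hiD => ?_]
      · exact Finset.prod_congr rfl fun i hi => by simp [X, hi]
      · have hgi : (π i (g i) : H i →L[ℂ] H i) (e i) = w i := by
          by_contra hne
          exact hiD (hD g hg hfin hne)
        simp [X, hiD, hgi, hw]
    · refine restrictedProd_innerₛₗ_eq_zero (D := D) (fun i hiD => ?_) (fun i hiD => ?_) ?_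
      · simp [hiD, hw]
      · simp [X, hiD, Unitary.norm_map, he]
      · refine (Set.Infinite.sdiff hfin D.finite_toSet).mono fun i hi => ?_
        obtain ⟨hne, hiD⟩ := hi
        rw [Finset.mem_coe] at hiD
        simpa [X, hiD] using hne
  have hb : b = ∑ g ∈ b.coeff.support, b.coeff g • MonoidAlgebra.single g (1 : ℂ) := by
    conv_lhs => rw [← MonoidAlgebra.sum_coeff_single b]
    simp [Finsupp.sum]
  calc _ = lift Φ (ρ b (tprod ℂ X)) := by
        conv_rhs => rw [hb]
        rw [_root_.map_sum, LinearMap.sum_apply, _root_.map_sum, Finset.sum_filter]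
        refine Finset.sum_congr rfl fun g hg => ?_
        rw [map_smul, LinearMap.smul_apply, hρ, map_smul, lift.tprod, hΦ g hg, smul_eq_mul,
          mul_ite, mul_zero]
    _ = 0 := by rw [hzero _ hX, LinearMap.map_zero]

end Vanishing

theorem monoidAlgebra_pi_representation_injective_general {I : Type*}
    (G : I → Type*) [∀ i, Group (G i)]
    (H : I → Type*) [∀ i, NormedAddCommGroup (H i)] [∀ i, InnerProductSpace ℂ (H i)]
    [∀ i, CompleteSpace (H i)] [∀ i, Nontrivial (H i)]
    (π : ∀ i, G i →* unitary (H i →L[ℂ] H i))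
    (πalg : ∀ i, MonoidAlgebra ℂ (G i) →ₐ[ℂ] (H i →L[ℂ] H i))
    (hπalg : ∀ i (g : G i),
      πalg i (MonoidAlgebra.single g 1) = (π i g : H i →L[ℂ] H i))
    (hπinj : ∀ i, Function.Injective (πalg i))
    (ρ : MonoidAlgebra ℂ (∀ i, G i) →ₐ[ℂ] Module.End ℂ (⨂[ℂ] i, H i))
    (hρ : ∀ (g : ∀ i, G i) (x : ∀ i, H i),
      ρ (MonoidAlgebra.single g 1) (PiTensorProduct.tprod ℂ x) =
        PiTensorProduct.tprod ℂ (fun i => (π i (g i) : H i →L[ℂ] H i) (x i)))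
    (b : MonoidAlgebra ℂ (∀ i, G i))
    (hzero : ∀ ξ ∈ unTensorSpan H, ρ b ξ = 0) :
    b = 0 := by
  classical
  by_contra hb
  obtain ⟨g₀, hg₀⟩ : ∃ g₀, b.coeff g₀ ≠ 0 := by
    simpa [Finsupp.ext_iff] using MonoidAlgebra.coeff_eq_zero.not.mpr hb
  choose e he using fun i => exists_norm_eq (H i) zero_le_one
  set w : ∀ i, H i := fun i => (π i (g₀ i) : H i →L[ℂ] H i) (e i)
  have hw : ∀ i, ‖w i‖ = 1 := fun i => by simp [w, Unitary.norm_map, he]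
  set E : (∀ i, G i) → Set I := fun g => {i | (π i (g i) : H i →L[ℂ] H i) (e i) ≠ w i}
  set S := {g ∈ b.coeff.support | (E g).Finite}
  obtain ⟨D₀, hD₀⟩ := S.exists_finset_forall_mem_eq_imp_eq
  have hE : (⋃ g ∈ S, E g).Finite :=
    S.finite_toSet.biUnion fun g hg => (Finset.mem_filter.mp hg).2
  have hvanish := sum_filter_mul_prod_inner_eq_zero π hρ hzero he hw (D := D₀ ∪ hE.toFinset)
    fun g hg hfin i hi => Finset.mem_union_right _ <|
      hE.mem_toFinset.mpr (Set.mem_biUnion (Finset.mem_filter.mpr ⟨hg, hfin⟩) hi)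
  have hg₀S : g₀ ∈ S := Finset.mem_filter.mpr ⟨Finsupp.mem_support_iff.mpr hg₀, by simp [E, w]⟩
  refine hg₀ (eq_zero_of_forall_sum_mul_prod_inner_eq_zero hπinj (D₀ ∪ hE.toFinset) (K := S)
    (fun g hg g' hg' h => hD₀ g hg g' hg' fun i hi => h i (Finset.mem_union_left _ hi))
    (fun u x => by simpa only [hπalg] using hvanish u x) g₀ hg₀S)

/-- If the unitary representations `π_i` of the groups `G_i` on the Hilbert spaces `H_i`
induce injective representations of the group algebras `ℂ[G_i]`, then the tensor-type
representation `ρ` of `ℂ[Π_{i∈I} G_i]` on `⨂_{i∈I} H_i` is injective, already when tested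
against vectors in `⨂^un_{i∈I} H_i`. -/
theorem monoidAlgebra_pi_representation_injective {I : Type*} [Infinite I]
    (G : I → Type*) [∀ i, Group (G i)]
    (H : I → Type*) [∀ i, NormedAddCommGroup (H i)] [∀ i, InnerProductSpace ℂ (H i)]
    [∀ i, CompleteSpace (H i)] [∀ i, Nontrivial (H i)]
    (π : ∀ i, G i →* unitary (H i →L[ℂ] H i))
    (πalg : ∀ i, MonoidAlgebra ℂ (G i) →ₐ[ℂ] (H i →L[ℂ] H i))
    (hπalg : ∀ i (g : G i),
      πalg i (MonoidAlgebra.single g 1) = (π i g : H i →L[ℂ] H i))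
    (hπinj : ∀ i, Function.Injective (πalg i))
    (ρ : MonoidAlgebra ℂ (∀ i, G i) →ₐ[ℂ] Module.End ℂ (⨂[ℂ] i, H i))
    (hρ : ∀ (g : ∀ i, G i) (x : ∀ i, H i),
      ρ (MonoidAlgebra.single g 1) (PiTensorProduct.tprod ℂ x) =
        PiTensorProduct.tprod ℂ (fun i => (π i (g i) : H i →L[ℂ] H i) (x i)))
    (b : MonoidAlgebra ℂ (∀ i, G i))
    (hzero : ∀ ξ ∈ unTensorSpan H, ρ b ξ = 0) :
    b = 0 :=
  monoidAlgebra_pi_representation_injective_general G H π πalg hπalg hπinj ρ hρ b hzero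
end
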